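/- arXiv:1909.04231 — 2 statements merged into one kernel-verified Lean document; each statement's English description precedes it below -/
import Mathlib

section
/- Non-golden random games are asymptotically robust: for every p ∈ [0,1] with p ≠ φ and every fixed d ∈ ℕ, lim_{n→∞} F_n(d,p) = 0. -/
open Filter Topology

/-- The golden ratio `φ = (√5 − 1)/2`. -/
noncomputable def phi : ℝ := (Real.sqrt 5 - 1) / 2

/-- Backward-induction value of the win-lose game of depth `n` on the complete binary tree:
`V_0(a) = a 0`; for `n ≥ 1`, the value is the `AND` of the values of the two depth-`(n−1)`
subtrees if `n` is odd (Player 2, the minimizer, moves) and the `OR` if `n` is even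
(Player 1, the maximizer, moves).  Player 2 moves last. -/
def gameValue : (n : ℕ) → (Fin (2 ^ n) → Bool) → Bool
  | 0, a => a 0
  | n + 1, a =>
      have h : 2 ^ (n + 1) = 2 ^ n + 2 ^ n := by rw [pow_succ]; omega
      let aL : Fin (2 ^ n) → Bool := fun i => a ⟨i.1, by have := i.2; omega⟩
      let aR : Fin (2 ^ n) → Bool := fun i => a ⟨i.1 + 2 ^ n, by have := i.2; omega⟩
      if (n + 1) % 2 = 1 then gameValue n aL && gameValue n aR
      else gameValue n aL || gameValue n aR

/-- `μ_{n,p}(S)`: the probability of a set `S` of depth-`n` games when the `2^n` payoffs are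
i.i.d. Bernoulli, each `true` with probability `p`. -/
noncomputable def prob (n : ℕ) (p : ℝ) (S : Set (Fin (2 ^ n) → Bool)) : ℝ :=
  ∑ a : Fin (2 ^ n) → Bool, S.indicator (fun a => ∏ i, if a i then p else 1 - p) a

/-- A game `a` of depth `n` is `d`-fragile if there is a game `a'` at Hamming distance at most
`d` from `a` whose value differs from that of `a`. -/
def Fragile (n d : ℕ) (a : Fin (2 ^ n) → Bool) : Prop :=
  ∃ a' : Fin (2 ^ n) → Bool, hammingDist a a' ≤ d ∧ gameValue n a' ≠ gameValue n a

/-- `F_n(d,p)`: the probability that a depth-`n` random game with parameter `p` is `d`-fragile. -/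
noncomputable def fragProb (n d : ℕ) (p : ℝ) : ℝ := prob n p {a | Fragile n d a}


open Finset

noncomputable def w (p : ℝ) (b : Bool) : ℝ := if b then p else 1 - p

lemma w_nonneg {p : ℝ} (h0 : 0 ≤ p) (h1 : p ≤ 1) (b : Bool) : 0 ≤ w p b := by
  cases b <;> simp [w] <;> linarith

lemma w_sum (p : ℝ) : w p true + w p false = 1 := by simp [w]

lemma sum_pi_bool {ι : Type*} [Fintype ι] [DecidableEq ι] (g : ι → Bool → ℝ) :
    ∑ a : ι → Bool, ∏ i, g i (a i) = ∏ i, (g i true + g i false) := by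
  have := (Fintype.prod_sum (fun (i : ι) (b : Bool) => g i b)).symm
  rw [this]
  exact Finset.prod_congr rfl fun i _ => by simp [Fintype.sum_bool]

lemma push {ι γ : Type*} [Fintype ι] [DecidableEq ι] [Fintype γ] [DecidableEq γ]
    (μ : γ → ℝ) (T : γ → Bool) (f : (ι → Bool) → ℝ) :
    ∑ c : ι → γ, (∏ i, μ (c i)) * f (fun i => T (c i))
      = ∑ b : ι → Bool, (∏ i, ∑ x : γ, if T x = b i then μ x else 0) * f b := by
  classical
  have key : ∀ b : ι → Bool, (∏ i, ∑ x : γ, if T x = b i then μ x else 0)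
      = ∑ c : ι → γ, if (fun i => T (c i)) = b then ∏ i, μ (c i) else 0 := by
    intro b
    rw [Fintype.prod_sum (fun (i : ι) (x : γ) => if T x = b i then μ x else 0)]
    refine Finset.sum_congr rfl fun c _ => ?_
    by_cases h : (fun i => T (c i)) = b
    · rw [if_pos h]
      refine Finset.prod_congr rfl fun i _ => ?_
      rw [if_pos (by rw [← h])]
    · rw [if_neg h]
      obtain ⟨i, hi⟩ : ∃ i, T (c i) ≠ b i := by
        by_contra hc; push_neg at hc; exact h (funext hc)
      exact Finset.prod_eq_zero (Finset.mem_univ i) (if_neg hi)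
  simp_rw [key, Finset.sum_mul, ite_mul, zero_mul]
  rw [Finset.sum_comm]
  refine Finset.sum_congr rfl fun c _ => ?_
  rw [Finset.sum_ite_eq Finset.univ (fun i => T (c i)) (fun b => (∏ i, μ (c i)) * f b)]
  simp

lemma sum_event {ι : Type*} [Fintype ι] [DecidableEq ι] (r : ℝ) (D : Finset ι) (tgt : Bool) :
    ∑ ξ : ι → Bool, (∏ i, w r (ξ i)) * (if ∀ i ∈ D, ξ i = tgt then 1 else 0)
      = (w r tgt) ^ D.card := by
  classical
  have step : ∀ ξ : ι → Bool, (∏ i, w r (ξ i)) * (if ∀ i ∈ D, ξ i = tgt then 1 else 0)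
      = ∏ i, (if i ∈ D ∧ ξ i ≠ tgt then 0 else w r (ξ i)) := by
    intro ξ
    by_cases h : ∀ i ∈ D, ξ i = tgt
    · rw [if_pos h, mul_one]
      exact Finset.prod_congr rfl fun i _ => by
        rw [if_neg]; push_neg; intro hi; exact h i hi
    · rw [if_neg h, mul_zero]
      push_neg at h
      obtain ⟨i, hi, hne⟩ := h
      exact (Finset.prod_eq_zero (f := fun i => if i ∈ D ∧ ξ i ≠ tgt then 0 else w r (ξ i)) (Finset.mem_univ i) (if_pos ⟨hi, hne⟩)).symm
  simp_rw [step]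
  rw [sum_pi_bool (fun i x => if i ∈ D ∧ x ≠ tgt then 0 else w r x)]
  have : ∀ i, ((if i ∈ D ∧ true ≠ tgt then 0 else w r true)
      + (if i ∈ D ∧ false ≠ tgt then 0 else w r false)) = if i ∈ D then w r tgt else 1 := by
    intro i
    by_cases hi : i ∈ D <;> cases tgt <;> simp [hi, w]
  simp_rw [this]
  rw [Finset.prod_ite_mem, Finset.prod_const]
  congr 1
  simp

lemma sum_wt_one {ι : Type*} [Fintype ι] [DecidableEq ι] (r : ℝ) :
    ∑ ξ : ι → Bool, (∏ i, w r (ξ i)) = 1 := by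
  have := sum_event (ι := ι) r ∅ true
  simpa using this

lemma gameValue_succ (n : ℕ) (a : Fin (2 ^ (n+1)) → Bool) :
    gameValue (n+1) a =
      if (n + 1) % 2 = 1 then
        gameValue n (fun i => a ⟨i.1, by { have h2 : 2 ^ (n+1) = 2 ^ n + 2 ^ n := by { rw [pow_succ]; omega }; have := i.2; omega }⟩)
          && gameValue n (fun i => a ⟨i.1 + 2^n, by { have h2 : 2 ^ (n+1) = 2 ^ n + 2 ^ n := by { rw [pow_succ]; omega }; have := i.2; omega }⟩)
      else
        gameValue n (fun i => a ⟨i.1, by { have h2 : 2 ^ (n+1) = 2 ^ n + 2 ^ n := by { rw [pow_succ]; omega }; have := i.2; omega }⟩)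
          || gameValue n (fun i => a ⟨i.1 + 2^n, by { have h2 : 2 ^ (n+1) = 2 ^ n + 2 ^ n := by { rw [pow_succ]; omega }; have := i.2; omega }⟩) := rfl

lemma gameValue_mono : ∀ (n : ℕ) (a b : Fin (2 ^ n) → Bool),
    (∀ i, a i = true → b i = true) → gameValue n a = true → gameValue n b = true := by
  intro n
  induction n with
  | zero => intro a b h ha; exact h 0 ha
  | succ n ih =>
    intro a b h hv
    rw [gameValue_succ] at hv ⊢
    by_cases hp : (n + 1) % 2 = 1
    · rw [if_pos hp] at hv ⊢
      rw [Bool.and_eq_true] at hv ⊢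
      exact ⟨ih _ _ (fun i hi => h _ hi) hv.1, ih _ _ (fun i hi => h _ hi) hv.2⟩
    · rw [if_neg hp] at hv ⊢
      rw [Bool.or_eq_true] at hv ⊢
      rcases hv with hv | hv
      · exact Or.inl (ih _ _ (fun i hi => h _ hi) hv)
      · exact Or.inr (ih _ _ (fun i hi => h _ hi) hv)

noncomputable def qv (n : ℕ) (p : ℝ) : ℝ :=
  ∑ a : Fin (2 ^ n) → Bool, (∏ i, w p (a i)) * (if gameValue n a then 1 else 0)

def eSum (n : ℕ) : Fin (2 ^ n) ⊕ Fin (2 ^ n) ≃ Fin (2 ^ (n + 1)) :=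
  finSumFinEquiv.trans (finCongr (by rw [pow_succ]; omega))

lemma eSum_inl (n : ℕ) (i : Fin (2 ^ n)) : ((eSum n) (Sum.inl i)).1 = i.1 := rfl
lemma eSum_inr (n : ℕ) (i : Fin (2 ^ n)) : ((eSum n) (Sum.inr i)).1 = 2 ^ n + i.1 := rfl

def glue (n : ℕ) (x y : Fin (2 ^ n) → Bool) : Fin (2 ^ (n + 1)) → Bool :=
  fun j => Sum.elim x y ((eSum n).symm j)

lemma glue_inl (n : ℕ) (x y : Fin (2 ^ n) → Bool) (i : Fin (2 ^ n)) :
    glue n x y ((eSum n) (Sum.inl i)) = x i := by simp [glue]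

lemma glue_inr (n : ℕ) (x y : Fin (2 ^ n) → Bool) (i : Fin (2 ^ n)) :
    glue n x y ((eSum n) (Sum.inr i)) = y i := by simp [glue]

lemma gameValue_glue (n : ℕ) (x y : Fin (2 ^ n) → Bool) :
    gameValue (n + 1) (glue n x y) =
      if (n + 1) % 2 = 1 then gameValue n x && gameValue n y
      else gameValue n x || gameValue n y := by
  rw [gameValue_succ]
  have hx : (fun i : Fin (2 ^ n) => glue n x y ⟨i.1, by { have h2 : 2 ^ (n+1) = 2 ^ n + 2 ^ n := by { rw [pow_succ]; omega }; have := i.2; omega }⟩) = x := by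
    funext i
    have : (⟨i.1, by { have h2 : 2 ^ (n+1) = 2 ^ n + 2 ^ n := by { rw [pow_succ]; omega }; have := i.2; omega }⟩ : Fin (2 ^ (n+1))) = (eSum n) (Sum.inl i) := by
      apply Fin.ext; rw [eSum_inl]
    rw [this, glue_inl]
  have hy : (fun i : Fin (2 ^ n) => glue n x y ⟨i.1 + 2 ^ n, by { have h2 : 2 ^ (n+1) = 2 ^ n + 2 ^ n := by { rw [pow_succ]; omega }; have := i.2; omega }⟩) = y := by
    funext i
    have : (⟨i.1 + 2 ^ n, by { have h2 : 2 ^ (n+1) = 2 ^ n + 2 ^ n := by { rw [pow_succ]; omega }; have := i.2; omega }⟩ : Fin (2 ^ (n+1))) = (eSum n) (Sum.inr i) := by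
      apply Fin.ext; rw [eSum_inr]; exact Nat.add_comm _ _
    rw [this, glue_inr]
  rw [hx, hy]

lemma prod_glue (n : ℕ) (f : Bool → ℝ) (x y : Fin (2 ^ n) → Bool) :
    (∏ i, f (glue n x y i)) = (∏ i, f (x i)) * ∏ i, f (y i) := by
  rw [← Equiv.prod_comp (eSum n) (fun j => f (glue n x y j)), Fintype.prod_sum_type]
  simp only [glue_inl, glue_inr]

def eFun (n : ℕ) : (Fin (2 ^ n) → Bool) × (Fin (2 ^ n) → Bool) ≃ (Fin (2 ^ (n + 1)) → Bool) where
  toFun xy := glue n xy.1 xy.2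
  invFun a := (fun i => a ((eSum n) (Sum.inl i)), fun i => a ((eSum n) (Sum.inr i)))
  left_inv := by
    rintro ⟨x, y⟩
    simp only [Prod.mk.injEq]
    constructor <;> funext i
    · exact glue_inl n x y i
    · exact glue_inr n x y i
  right_inv := by
    intro a
    funext j
    show glue n (fun i => a ((eSum n) (Sum.inl i))) (fun i => a ((eSum n) (Sum.inr i))) j = a j
    unfold glue
    rcases h : (eSum n).symm j with i | i
    · rw [Sum.elim_inl, ← h, Equiv.apply_symm_apply]
    · rw [Sum.elim_inr, ← h, Equiv.apply_symm_apply]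

lemma sum_glue (n : ℕ) (F : (Fin (2 ^ (n + 1)) → Bool) → ℝ) :
    ∑ a, F a = ∑ x : Fin (2 ^ n) → Bool, ∑ y : Fin (2 ^ n) → Bool, F (glue n x y) := by
  rw [← Equiv.sum_comp (eFun n) F, Fintype.sum_prod_type]
  rfl

lemma qv_succ (n : ℕ) (p : ℝ) :
    qv (n + 1) p = if (n + 1) % 2 = 1 then (qv n p) ^ 2
      else 1 - (1 - qv n p) ^ 2 := by
  unfold qv
  rw [sum_glue n]
  by_cases hp : (n + 1) % 2 = 1
  · rw [if_pos hp]
    have key : ∀ x y : Fin (2 ^ n) → Bool,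
        (∏ i, w p (glue n x y i)) * (if gameValue (n+1) (glue n x y) then (1:ℝ) else 0)
        = ((∏ i, w p (x i)) * (if gameValue n x then 1 else 0))
          * ((∏ i, w p (y i)) * (if gameValue n y then 1 else 0)) := by
      intro x y
      rw [prod_glue, gameValue_glue, if_pos hp]
      cases hx : gameValue n x <;> cases hy : gameValue n y <;> (try simp) <;> (try ring)
    simp_rw [key]
    rw [← Finset.sum_mul_sum, sq]
  · rw [if_neg hp]
    have key : ∀ x y : Fin (2 ^ n) → Bool,
        (∏ i, w p (glue n x y i)) * (if gameValue (n+1) (glue n x y) then (1:ℝ) else 0)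
        = ((∏ i, w p (x i)) * (if gameValue n x then 1 else 0)) * (∏ i, w p (y i))
          + (∏ i, w p (x i)) * ((∏ i, w p (y i)) * (if gameValue n y then 1 else 0))
          - ((∏ i, w p (x i)) * (if gameValue n x then 1 else 0))
            * ((∏ i, w p (y i)) * (if gameValue n y then 1 else 0)) := by
      intro x y
      rw [prod_glue, gameValue_glue, if_neg hp]
      cases hx : gameValue n x <;> cases hy : gameValue n y <;> (try simp) <;> (try ring)
    simp_rw [key]
    simp only [Finset.sum_sub_distrib, Finset.sum_add_distrib, ← Finset.mul_sum,
      ← Finset.sum_mul, sum_wt_one p, mul_one, one_mul]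
    ring

lemma qv_zero (p : ℝ) : qv 0 p = p := by
  letI : Unique (Fin (2 ^ 0)) := ⟨⟨⟨0, by norm_num⟩⟩, fun a => Fin.ext (by omega)⟩
  unfold qv
  rw [← Equiv.sum_comp (Equiv.funUnique (Fin (2^0)) Bool).symm
    (fun a => (∏ i, w p (a i)) * (if gameValue 0 a then 1 else 0))]
  rw [Fintype.sum_bool]
  show (∏ _i : Fin (2^0), w p true) * (if gameValue 0 (fun _ => true) then 1 else 0)
    + (∏ _i : Fin (2^0), w p false) * (if gameValue 0 (fun _ => false) then 1 else 0) = p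
  have ht : gameValue 0 (fun _ => true) = true := rfl
  have hf : gameValue 0 (fun _ => false) = false := rfl
  rw [ht, hf]
  simp [w]

lemma phi_facts : 0 < phi ∧ phi < 1 ∧ phi ^ 2 + phi - 1 = 0 := by
  have h5 : Real.sqrt 5 ^ 2 = 5 := Real.sq_sqrt (by norm_num)
  have h5' : 0 ≤ Real.sqrt 5 := Real.sqrt_nonneg 5
  have h2 : 2 < Real.sqrt 5 := by nlinarith
  have h3 : Real.sqrt 5 < 3 := by nlinarith
  refine ⟨by unfold phi; linarith, by unfold phi; linarith, by unfold phi; nlinarith⟩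

/-- For `0 ≤ r < phi`, `qv n r → 0`. -/
lemma qv_tendsto_zero {r : ℝ} (hr0 : 0 ≤ r) (hr : r < phi) :
    Tendsto (fun n => qv n r) atTop (𝓝 0) := by
  obtain ⟨hphi0, hphi1, hphi⟩ := phi_facts
  have hr1 : r < 1 := lt_trans hr hphi1
  have hrq : r ^ 2 + r - 1 < 0 := by nlinarith
  set c : ℝ := 2 * r - r ^ 3 with hc
  have hc0 : 0 ≤ c := by nlinarith
  have hc1 : c < 1 := by nlinarith
  have inv : ∀ k : ℕ, 0 ≤ qv (2 * k) r ∧ qv (2 * k) r ≤ r ∧ qv (2 * k) r ≤ r * c ^ k := by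
    intro k
    induction k with
    | zero =>
      simp only [Nat.mul_zero, qv_zero, pow_zero, mul_one]
      exact ⟨hr0, le_rfl, le_rfl⟩
    | succ k ih =>
      obtain ⟨h0, h1, h2⟩ := ih
      have e1 : qv (2 * k + 1) r = (qv (2 * k) r) ^ 2 := by
        rw [show 2 * k + 1 = (2 * k) + 1 by ring, qv_succ]
        rw [if_pos (by omega)]
      have e2 : qv (2 * (k + 1)) r = 1 - (1 - qv (2 * k + 1) r) ^ 2 := by
        rw [show 2 * (k + 1) = (2 * k + 1) + 1 by ring, qv_succ]
        rw [if_neg (by omega)]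
      set x := qv (2 * k) r with hxdef
      have key : qv (2 * (k + 1)) r = 2 * x ^ 2 - x ^ 4 := by rw [e2, e1]; ring
      have hx1 : x ≤ 1 := le_trans h1 hr1.le
      have hx2 : x ^ 2 ≤ 1 := by nlinarith
      have hsum : x ^ 2 + x * r + r ^ 2 ≤ 2 := by
        nlinarith [mul_nonneg hr0 (by linarith : (0:ℝ) ≤ 1 - r),
          mul_nonneg (by linarith : (0:ℝ) ≤ r - x) (by linarith : (0:ℝ) ≤ r + x),
          mul_nonneg hr0 (by linarith : (0:ℝ) ≤ r - x)]
      have step : 2 * x ^ 2 - x ^ 4 ≤ c * x := by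
        nlinarith [mul_nonneg (mul_nonneg h0 (by linarith : (0:ℝ) ≤ r - x))
          (by linarith : (0:ℝ) ≤ 2 - (x ^ 2 + x * r + r ^ 2))]
      refine ⟨?_, ?_, ?_⟩
      · rw [key]
        nlinarith [mul_nonneg (sq_nonneg x) (by linarith : (0:ℝ) ≤ 2 - x ^ 2)]
      · rw [key]
        have h3 : c * x ≤ c * r := mul_le_mul_of_nonneg_left h1 hc0
        nlinarith
      · rw [key]
        have h3 : c * x ≤ c * (r * c ^ k) := mul_le_mul_of_nonneg_left h2 hc0
        calc 2 * x ^ 2 - x ^ 4 ≤ c * x := step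
          _ ≤ c * (r * c ^ k) := h3
          _ = r * c ^ (k + 1) := by ring
  have bound : ∀ n : ℕ, |qv n r| ≤ r * c ^ (n / 2) := by
    intro n
    rcases Nat.even_or_odd n with ⟨k, hk⟩ | ⟨k, hk⟩
    · obtain ⟨h0, h1, h2⟩ := inv k
      have hn : n = 2 * k := by omega
      have hdiv : (2 * k) / 2 = k := by omega
      rw [hn, abs_of_nonneg h0, hdiv]
      exact h2
    · obtain ⟨h0, h1, h2⟩ := inv k
      have hn : n = 2 * k + 1 := by omega
      have e1 : qv (2 * k + 1) r = (qv (2 * k) r) ^ 2 := by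
        rw [show 2 * k + 1 = (2 * k) + 1 by ring, qv_succ, if_pos (by omega)]
      have hdiv : (2 * k + 1) / 2 = k := by omega
      rw [hn, hdiv, e1, abs_of_nonneg (sq_nonneg _)]
      have hx1 : qv (2 * k) r ≤ 1 := le_trans h1 hr1.le
      nlinarith
  have hlim : Tendsto (fun n : ℕ => r * c ^ (n / 2)) atTop (𝓝 0) := by
    have h1 : Tendsto (fun k : ℕ => c ^ k) atTop (𝓝 0) :=
      tendsto_pow_atTop_nhds_zero_of_lt_one hc0 hc1
    have h2 : Tendsto (fun n : ℕ => n / 2) atTop atTop :=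
      Filter.tendsto_atTop_atTop.2 fun b => ⟨2 * b, fun n hn => by omega⟩
    have := (h1.comp h2).const_mul r
    simpa using this
  exact squeeze_zero_norm bound hlim

set_option maxHeartbeats 1000000 in
/-- For `phi < r ≤ 1`, `qv n r → 1`. -/
lemma qv_tendsto_one {r : ℝ} (hr : phi < r) (hr1 : r ≤ 1) :
    Tendsto (fun n => qv n r) atTop (𝓝 1) := by
  obtain ⟨hphi0, hphi1, hphi⟩ := phi_facts
  have hr0 : 0 < r := lt_trans hphi0 hr
  set t0 : ℝ := 1 - r with ht0def
  have ht00 : 0 ≤ t0 := by linarith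
  have ht01 : t0 < 1 := by linarith
  have htq : t0 ^ 2 - 3 * t0 + 1 > 0 := by nlinarith
  set c : ℝ := t0 * (2 - t0) ^ 2 with hc
  have hc0 : 0 ≤ c := by nlinarith
  have hc1 : c < 1 := by nlinarith
  have inv : ∀ k : ℕ, qv (2 * k) r ≤ 1 ∧ 1 - qv (2 * k) r ≤ t0 ∧
      1 - qv (2 * k) r ≤ t0 * c ^ k ∧ 0 ≤ 1 - qv (2 * k) r := by
    intro k
    induction k with
    | zero =>
      simp only [Nat.mul_zero, qv_zero, pow_zero, mul_one]
      exact ⟨hr1, le_rfl, le_rfl, by linarith⟩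
    | succ k ih =>
      obtain ⟨h1, h2, h3, h4⟩ := ih
      have e1 : qv (2 * k + 1) r = (qv (2 * k) r) ^ 2 := by
        rw [show 2 * k + 1 = (2 * k) + 1 by ring, qv_succ, if_pos (by omega)]
      have e2 : qv (2 * (k + 1)) r = 1 - (1 - qv (2 * k + 1) r) ^ 2 := by
        rw [show 2 * (k + 1) = (2 * k + 1) + 1 by ring, qv_succ, if_neg (by omega)]
      set t := 1 - qv (2 * k) r with htdef
      have key : 1 - qv (2 * (k + 1)) r = t ^ 2 * (2 - t) ^ 2 := by
        rw [e2, e1]; ring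
      have ht1 : t < 1 := by linarith
      have ht05 : t0 < 1 / 2 := by
        nlinarith [mul_nonneg ht00 (by linarith : (0:ℝ) ≤ 1 - t0)]
      have hfac : (0:ℝ) ≤ 4 - 4 * (t0 + t) + (t0 ^ 2 + t0 * t + t ^ 2) := by
        nlinarith [sq_nonneg t, sq_nonneg t0, mul_nonneg h4 ht00]
      have hstep : t ^ 2 * (2 - t) ^ 2 ≤ c * t := by
        nlinarith [mul_nonneg (mul_nonneg h4 (by linarith : (0:ℝ) ≤ t0 - t)) hfac]
      have hsq : (0:ℝ) ≤ t ^ 2 * (2 - t) ^ 2 := by positivity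
      refine ⟨?_, ?_, ?_, ?_⟩
      · linarith [key, hsq]
      · have h5 : c * t ≤ c * t0 := mul_le_mul_of_nonneg_left h2 hc0
        have h6 : c * t0 ≤ 1 * t0 := mul_le_mul_of_nonneg_right hc1.le ht00
        linarith [key, hstep]
      · have h5 : c * t ≤ c * (t0 * c ^ k) := mul_le_mul_of_nonneg_left h3 hc0
        have : 1 - qv (2 * (k + 1)) r ≤ c * (t0 * c ^ k) := by
          rw [key]; exact le_trans hstep h5
        calc 1 - qv (2 * (k + 1)) r ≤ c * (t0 * c ^ k) := this
          _ = t0 * c ^ (k + 1) := by ring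
      · rw [key]; positivity
  have bound : ∀ n : ℕ, |qv n r - 1| ≤ 2 * t0 * c ^ (n / 2) := by
    intro n
    rcases Nat.even_or_odd n with ⟨k, hk⟩ | ⟨k, hk⟩
    · obtain ⟨h1, h2, h3, h4⟩ := inv k
      have hn : n = 2 * k := by omega
      have hdiv : (2 * k) / 2 = k := by omega
      rw [hn, hdiv, abs_sub_comm, abs_of_nonneg (by linarith)]
      nlinarith [pow_nonneg hc0 k]
    · obtain ⟨h1, h2, h3, h4⟩ := inv k
      have hn : n = 2 * k + 1 := by omega
      have e1 : qv (2 * k + 1) r = (qv (2 * k) r) ^ 2 := by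
        rw [show 2 * k + 1 = (2 * k) + 1 by ring, qv_succ, if_pos (by omega)]
      have hdiv : (2 * k + 1) / 2 = k := by omega
      have hq0 : 0 ≤ qv (2 * k) r := by linarith
      rw [hn, hdiv, e1, abs_sub_comm, abs_of_nonneg (by nlinarith)]
      nlinarith
  have hlim : Tendsto (fun n : ℕ => 2 * t0 * c ^ (n / 2)) atTop (𝓝 0) := by
    have h1 : Tendsto (fun k : ℕ => c ^ k) atTop (𝓝 0) :=
      tendsto_pow_atTop_nhds_zero_of_lt_one hc0 hc1
    have h2 : Tendsto (fun n : ℕ => n / 2) atTop atTop :=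
      Filter.tendsto_atTop_atTop.2 fun b => ⟨2 * b, fun n hn => by omega⟩
    have := (h1.comp h2).const_mul (2 * t0)
    simpa using this
  have : Tendsto (fun n => qv n r - 1) atTop (𝓝 0) := squeeze_zero_norm bound hlim
  have := this.add_const 1
  simpa using this

section Core

variable {ι : Type*} [Fintype ι] [DecidableEq ι] (v : (ι → Bool) → Bool) (d : ℕ)

/-- the fragile-true predicate -/
def PT (a : ι → Bool) : Prop := v a = true ∧ ∃ a', hammingDist a a' ≤ d ∧ v a' ≠ v a

/-- chosen witness below `a` killing the value -/
noncomputable def witD (a : ι → Bool) : ι → Bool := by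
  classical
  exact if h : PT v d a then (fun i => a i && Classical.choose h.2 i) else a

lemma hammingDist_eq (a b : ι → Bool) :
    hammingDist a b = (Finset.univ.filter fun i => a i ≠ b i).card := rfl

lemma witD_dist {a : ι → Bool} (h : PT v d a) : hammingDist a (witD v d a) ≤ d := by
  have spec := Classical.choose_spec h.2
  set a' := Classical.choose h.2
  have : witD v d a = fun i => a i && a' i := by rw [witD, dif_pos h]
  rw [this]
  refine le_trans ?_ spec.1
  rw [hammingDist_eq, hammingDist_eq]
  apply Finset.card_le_card
  apply Finset.monotone_filter_right
  intro i _ hi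
  intro hcontra
  apply hi
  rw [← hcontra, Bool.and_self]

lemma witD_le {a : ι → Bool} (i : ι) : witD v d a i = true → a i = true := by
  rw [witD]
  split
  · exact fun h => (Bool.and_elim_left h)
  · exact fun h => h

lemma witD_val (hv : ∀ a b : ι → Bool, (∀ i, a i = true → b i = true) → v a = true → v b = true)
    {a : ι → Bool} (h : PT v d a) : v (witD v d a) = false := by
  have spec := Classical.choose_spec h.2
  set a' := Classical.choose h.2
  have hw : witD v d a = fun i => a i && a' i := by rw [witD, dif_pos h]
  have ha' : v a' = false := by
    cases hva' : v a'
    · rfl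
    · exact absurd h.1 (by rw [← hva'] at *; exact fun hh => spec.2 (hva'.trans hh.symm))
  cases hvw : v (witD v d a)
  · rfl
  · exfalso
    have := hv (witD v d a) a' (fun i hi => by
      rw [hw] at hi; exact Bool.and_elim_right hi) hvw
    rw [ha'] at this; exact Bool.false_ne_true this
end Core

section Core2

variable {ι : Type*} [Fintype ι] [DecidableEq ι]

lemma coreDown (v : (ι → Bool) → Bool)
    (hv : ∀ a b : ι → Bool, (∀ i, a i = true → b i = true) → v a = true → v b = true)
    (d : ℕ) (p δ : ℝ) (hp0 : 0 ≤ p) (hp1 : p ≤ 1) (hδ0 : 0 < δ) (hδ1 : δ ≤ 1) :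
    δ ^ d * (∑ a : ι → Bool, Set.indicator {a : ι → Bool | PT v d a} (fun a => ∏ i, w p (a i)) a)
      ≤ (∑ a : ι → Bool, (∏ i, w p (a i)) * (if v a then 1 else 0))
        - (∑ a : ι → Bool, (∏ i, w (p * (1 - δ)) (a i)) * (if v a then 1 else 0)) := by
  classical
  simp only [Set.indicator_apply, Set.mem_setOf_eq]
  have hw1 : ∀ b, 0 ≤ w p b := w_nonneg hp0 hp1
  have hwδ : ∀ b, 0 ≤ w (1 - δ) b := w_nonneg (by linarith) (by linarith)
  set μ : Bool × Bool → ℝ := fun x => w p x.1 * w (1 - δ) x.2 with hμ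
  have hμ0 : ∀ x, 0 ≤ μ x := fun x => mul_nonneg (hw1 _) (hwδ _)
  have hν1 : ∀ b : Bool, (∑ x : Bool × Bool, if x.1 = b then μ x else 0) = w p b := by
    intro b
    rw [Fintype.sum_prod_type]
    cases b <;> simp [hμ, w, Fintype.sum_bool] <;> ring
  have hν2 : ∀ b : Bool, (∑ x : Bool × Bool, if (x.1 && x.2) = b then μ x else 0)
      = w (p * (1 - δ)) b := by
    intro b
    rw [Fintype.sum_prod_type]
    cases b <;> simp [hμ, w, Fintype.sum_bool] <;> ring
  have hA : (∑ a : ι → Bool, (∏ i, w p (a i)) * (if v a then 1 else 0))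
      = ∑ c : ι → Bool × Bool, (∏ i, μ (c i)) * (if v (fun i => (c i).1) then 1 else 0) := by
    rw [push μ Prod.fst (fun b => if v b then (1:ℝ) else 0)]
    exact Finset.sum_congr rfl fun b _ => by
      rw [Finset.prod_congr rfl fun i _ => hν1 (b i)]
  have hB : (∑ a : ι → Bool, (∏ i, w (p * (1 - δ)) (a i)) * (if v a then 1 else 0))
      = ∑ c : ι → Bool × Bool, (∏ i, μ (c i))
          * (if v (fun i => (c i).1 && (c i).2) then 1 else 0) := by
    rw [push μ (fun x => x.1 && x.2) (fun b => if v b then (1:ℝ) else 0)]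
    exact Finset.sum_congr rfl fun b _ => by
      rw [Finset.prod_congr rfl fun i _ => hν2 (b i)]
  rw [hA, hB, ← Finset.sum_sub_distrib]
  have hdiff : ∀ c : ι → Bool × Bool,
      (∏ i, μ (c i)) * (if v (fun i => (c i).1) then (1:ℝ) else 0)
        - (∏ i, μ (c i)) * (if v (fun i => (c i).1 && (c i).2) then 1 else 0)
      ≥ (∏ i, μ (c i)) * (if PT v d (fun i => (c i).1)
          ∧ (∀ i, (c i).1 ≠ witD v d (fun j => (c j).1) i → (c i).2 = false) then 1 else 0) := by
    intro c
    set a : ι → Bool := fun i => (c i).1 with ha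
    set b : ι → Bool := fun i => (c i).1 && (c i).2 with hb
    have hμc : 0 ≤ ∏ i, μ (c i) := Finset.prod_nonneg fun i _ => hμ0 _
    by_cases hc : PT v d a ∧ (∀ i, a i ≠ witD v d a i → (c i).2 = false)
    · rw [if_pos hc]
      have hva : v a = true := hc.1.1
      have hvb : v b = false := by
        cases hvb : v b
        · rfl
        · exfalso
          have hble : ∀ i, b i = true → witD v d a i = true := by
            intro i hi
            have hai : a i = true := Bool.and_elim_left hi
            have hξi : (c i).2 = true := Bool.and_elim_right hi
            by_cases hw : a i = witD v d a i
            · rw [← hw]; exact hai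
            · rw [hc.2 i hw] at hξi; exact absurd hξi (by simp)
          have := hv b (witD v d a) hble hvb
          rw [witD_val v d hv hc.1] at this
          exact Bool.false_ne_true this
      rw [hva, hvb]
      norm_num
    · rw [if_neg hc, mul_zero]
      have : (if v b then (1:ℝ) else 0) ≤ (if v a then 1 else 0) := by
        cases hvb : v b
        · cases v a <;> norm_num
        · have : v a = true := hv b a (fun i hi => Bool.and_elim_left hi) hvb
          rw [this]
      nlinarith [hμc]
  refine le_trans ?_ (Finset.sum_le_sum fun c _ => hdiff c)
  -- now compute the RHS-lower-bound sum
  have split : (∑ c : ι → Bool × Bool, (∏ i, μ (c i)) * (if PT v d (fun i => (c i).1)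
        ∧ (∀ i, (c i).1 ≠ witD v d (fun j => (c j).1) i → (c i).2 = false) then 1 else 0))
      = ∑ x : ι → Bool, ∑ ξ : ι → Bool, (∏ i, μ (x i, ξ i)) * (if PT v d x
          ∧ (∀ i, x i ≠ witD v d x i → ξ i = false) then 1 else 0) := by
    rw [← Equiv.sum_comp ((Equiv.arrowProdEquivProdArrow ι (fun _ => Bool) (fun _ => Bool)).symm)
      (fun c => (∏ i, μ (c i)) * (if PT v d (fun i => (c i).1)
        ∧ (∀ i, (c i).1 ≠ witD v d (fun j => (c j).1) i → (c i).2 = false) then 1 else 0)),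
      Fintype.sum_prod_type]
    rfl
  rw [split, Finset.mul_sum]
  apply Finset.sum_le_sum
  intro x _
  by_cases hx : PT v d x
  · have inner : (∑ ξ : ι → Bool, (∏ i, μ (x i, ξ i)) * (if PT v d x
        ∧ (∀ i, x i ≠ witD v d x i → ξ i = false) then 1 else 0))
        = (∏ i, w p (x i)) * δ ^ ((Finset.univ.filter fun i => x i ≠ witD v d x i).card) := by
      have hprodsplit : ∀ ξ : ι → Bool, (∏ i, μ (x i, ξ i))
          = (∏ i, w p (x i)) * ∏ i, w (1 - δ) (ξ i) := by
        intro ξ; rw [← Finset.prod_mul_distrib]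
      calc (∑ ξ : ι → Bool, (∏ i, μ (x i, ξ i)) * (if PT v d x
            ∧ (∀ i, x i ≠ witD v d x i → ξ i = false) then 1 else 0))
          = ∑ ξ : ι → Bool, (∏ i, w p (x i)) * ((∏ i, w (1 - δ) (ξ i))
              * (if ∀ i ∈ (Finset.univ.filter fun i => x i ≠ witD v d x i), ξ i = false
                  then 1 else 0)) := by
            refine Finset.sum_congr rfl fun ξ _ => ?_
            rw [hprodsplit ξ]
            have : (PT v d x ∧ (∀ i, x i ≠ witD v d x i → ξ i = false))
                ↔ (∀ i ∈ (Finset.univ.filter fun i => x i ≠ witD v d x i), ξ i = false) := by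
              constructor
              · intro h i hi
                exact h.2 i (Finset.mem_filter.1 hi).2
              · intro h
                exact ⟨hx, fun i hi => h i (Finset.mem_filter.2 ⟨Finset.mem_univ i, hi⟩)⟩
            rw [if_congr this rfl rfl]
            ring
          _ = (∏ i, w p (x i)) * ∑ ξ : ι → Bool, ((∏ i, w (1 - δ) (ξ i))
              * (if ∀ i ∈ (Finset.univ.filter fun i => x i ≠ witD v d x i), ξ i = false
                  then 1 else 0)) := by rw [← Finset.mul_sum]
          _ = (∏ i, w p (x i)) * (w (1 - δ) false)
              ^ ((Finset.univ.filter fun i => x i ≠ witD v d x i).card) := by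
            rw [sum_event]
          _ = (∏ i, w p (x i)) * δ ^ ((Finset.univ.filter fun i => x i ≠ witD v d x i).card) := by
            have : w (1 - δ) false = δ := by simp [w]
            rw [this]
    rw [inner, if_pos hx]
    have hcard : ((Finset.univ.filter fun i => x i ≠ witD v d x i).card) ≤ d := by
      have := witD_dist v d hx
      rw [hammingDist_eq] at this
      exact this
    have hpow : δ ^ d ≤ δ ^ ((Finset.univ.filter fun i => x i ≠ witD v d x i).card) :=
      pow_le_pow_of_le_one hδ0.le hδ1 hcard
    have hW : 0 ≤ ∏ i, w p (x i) := Finset.prod_nonneg fun i _ => hw1 _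
    calc δ ^ d * (∏ i, w p (x i)) ≤ (∏ i, w p (x i))
          * δ ^ ((Finset.univ.filter fun i => x i ≠ witD v d x i).card) := by
          rw [mul_comm]; exact mul_le_mul_of_nonneg_left hpow hW
      _ = _ := rfl
  · rw [if_neg hx, mul_zero]
    refine Finset.sum_nonneg fun ξ _ => ?_
    have h0 : (if PT v d x ∧ (∀ i, x i ≠ witD v d x i → ξ i = false) then (1:ℝ) else 0) = 0 := by
      rw [if_neg]; exact fun h => hx h.1
    rw [h0, mul_zero]

end Core2

section Core3

variable {ι : Type*} [Fintype ι] [DecidableEq ι] (v : (ι → Bool) → Bool) (d : ℕ)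

/-- the fragile-false predicate -/
def PF (a : ι → Bool) : Prop := v a = false ∧ ∃ a', hammingDist a a' ≤ d ∧ v a' ≠ v a

/-- chosen witness above `a` making the value true -/
noncomputable def witU (a : ι → Bool) : ι → Bool := by
  classical
  exact if h : PF v d a then (fun i => a i || Classical.choose h.2 i) else a

lemma witU_dist {a : ι → Bool} (h : PF v d a) : hammingDist a (witU v d a) ≤ d := by
  have spec := Classical.choose_spec h.2
  set a' := Classical.choose h.2
  have : witU v d a = fun i => a i || a' i := by rw [witU, dif_pos h]
  rw [this]
  refine le_trans ?_ spec.1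
  rw [hammingDist_eq, hammingDist_eq]
  apply Finset.card_le_card
  apply Finset.monotone_filter_right
  intro i _ hi hcontra
  apply hi
  rw [← hcontra, Bool.or_self]

lemma witU_val (hv : ∀ a b : ι → Bool, (∀ i, a i = true → b i = true) → v a = true → v b = true)
    {a : ι → Bool} (h : PF v d a) : v (witU v d a) = true := by
  have spec := Classical.choose_spec h.2
  set a' := Classical.choose h.2
  have hw : witU v d a = fun i => a i || a' i := by rw [witU, dif_pos h]
  have ha' : v a' = true := by
    cases hva' : v a'
    · exact absurd (hva'.trans h.1.symm) spec.2
    · rfl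
  exact hv a' (witU v d a) (fun i hi => by rw [hw]; simp [hi]) ha'

lemma coreUp (hv : ∀ a b : ι → Bool, (∀ i, a i = true → b i = true) → v a = true → v b = true)
    (p δ : ℝ) (hp0 : 0 ≤ p) (hp1 : p ≤ 1) (hδ0 : 0 < δ) (hδ1 : δ ≤ 1) :
    δ ^ d * (∑ a : ι → Bool, Set.indicator {a : ι → Bool | PF v d a} (fun a => ∏ i, w p (a i)) a)
      ≤ (∑ a : ι → Bool, (∏ i, w (p + δ * (1 - p)) (a i)) * (if v a then 1 else 0))
        - (∑ a : ι → Bool, (∏ i, w p (a i)) * (if v a then 1 else 0)) := by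
  classical
  simp only [Set.indicator_apply, Set.mem_setOf_eq]
  have hw1 : ∀ b, 0 ≤ w p b := w_nonneg hp0 hp1
  have hwδ : ∀ b, 0 ≤ w δ b := w_nonneg (by linarith) (by linarith)
  set μ : Bool × Bool → ℝ := fun x => w p x.1 * w δ x.2 with hμ
  have hμ0 : ∀ x, 0 ≤ μ x := fun x => mul_nonneg (hw1 _) (hwδ _)
  have hν1 : ∀ b : Bool, (∑ x : Bool × Bool, if x.1 = b then μ x else 0) = w p b := by
    intro b
    rw [Fintype.sum_prod_type]
    cases b <;> simp [hμ, w, Fintype.sum_bool] <;> ring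
  have hν2 : ∀ b : Bool, (∑ x : Bool × Bool, if (x.1 || x.2) = b then μ x else 0)
      = w (p + δ * (1 - p)) b := by
    intro b
    rw [Fintype.sum_prod_type]
    cases b <;> simp [hμ, w, Fintype.sum_bool] <;> ring
  have hA : (∑ a : ι → Bool, (∏ i, w p (a i)) * (if v a then 1 else 0))
      = ∑ c : ι → Bool × Bool, (∏ i, μ (c i)) * (if v (fun i => (c i).1) then 1 else 0) := by
    rw [push μ Prod.fst (fun b => if v b then (1:ℝ) else 0)]
    exact Finset.sum_congr rfl fun b _ => by
      rw [Finset.prod_congr rfl fun i _ => hν1 (b i)]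
  have hB : (∑ a : ι → Bool, (∏ i, w (p + δ * (1 - p)) (a i)) * (if v a then 1 else 0))
      = ∑ c : ι → Bool × Bool, (∏ i, μ (c i))
          * (if v (fun i => (c i).1 || (c i).2) then 1 else 0) := by
    rw [push μ (fun x => x.1 || x.2) (fun b => if v b then (1:ℝ) else 0)]
    exact Finset.sum_congr rfl fun b _ => by
      rw [Finset.prod_congr rfl fun i _ => hν2 (b i)]
  rw [hA, hB, ← Finset.sum_sub_distrib]
  have hdiff : ∀ c : ι → Bool × Bool,
      (∏ i, μ (c i)) * (if v (fun i => (c i).1 || (c i).2) then (1:ℝ) else 0)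
        - (∏ i, μ (c i)) * (if v (fun i => (c i).1) then 1 else 0)
      ≥ (∏ i, μ (c i)) * (if PF v d (fun i => (c i).1)
          ∧ (∀ i, (c i).1 ≠ witU v d (fun j => (c j).1) i → (c i).2 = true) then 1 else 0) := by
    intro c
    set a : ι → Bool := fun i => (c i).1 with ha
    set b : ι → Bool := fun i => (c i).1 || (c i).2 with hb
    have hμc : 0 ≤ ∏ i, μ (c i) := Finset.prod_nonneg fun i _ => hμ0 _
    by_cases hc : PF v d a ∧ (∀ i, a i ≠ witU v d a i → (c i).2 = true)
    · rw [if_pos hc]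
      have hva : v a = false := hc.1.1
      have hvb : v b = true := by
        refine hv (witU v d a) b (fun i hi => ?_) (witU_val v d hv hc.1)
        by_cases hw : a i = witU v d a i
        · have h1 : a i = true := by rw [hw]; exact hi
          show (a i || (c i).2) = true
          rw [h1, Bool.true_or]
        · have h2 := hc.2 i hw
          show (a i || (c i).2) = true
          rw [h2, Bool.or_true]
      rw [hva, hvb]
      norm_num
    · rw [if_neg hc, mul_zero]
      have : (if v a then (1:ℝ) else 0) ≤ (if v b then 1 else 0) := by
        cases hva : v a
        · cases v b <;> norm_num
        · have : v b = true := hv a b (fun i hi => by show (a i || (c i).2) = true; rw [hi, Bool.true_or]) hva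
          rw [this]
      nlinarith [hμc]
  refine le_trans ?_ (Finset.sum_le_sum fun c _ => hdiff c)
  have split : (∑ c : ι → Bool × Bool, (∏ i, μ (c i)) * (if PF v d (fun i => (c i).1)
        ∧ (∀ i, (c i).1 ≠ witU v d (fun j => (c j).1) i → (c i).2 = true) then 1 else 0))
      = ∑ x : ι → Bool, ∑ ξ : ι → Bool, (∏ i, μ (x i, ξ i)) * (if PF v d x
          ∧ (∀ i, x i ≠ witU v d x i → ξ i = true) then 1 else 0) := by
    rw [← Equiv.sum_comp ((Equiv.arrowProdEquivProdArrow ι (fun _ => Bool) (fun _ => Bool)).symm)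
      (fun c => (∏ i, μ (c i)) * (if PF v d (fun i => (c i).1)
        ∧ (∀ i, (c i).1 ≠ witU v d (fun j => (c j).1) i → (c i).2 = true) then 1 else 0)),
      Fintype.sum_prod_type]
    rfl
  rw [split, Finset.mul_sum]
  apply Finset.sum_le_sum
  intro x _
  by_cases hx : PF v d x
  · have inner : (∑ ξ : ι → Bool, (∏ i, μ (x i, ξ i)) * (if PF v d x
        ∧ (∀ i, x i ≠ witU v d x i → ξ i = true) then 1 else 0))
        = (∏ i, w p (x i)) * δ ^ ((Finset.univ.filter fun i => x i ≠ witU v d x i).card) := by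
      have hprodsplit : ∀ ξ : ι → Bool, (∏ i, μ (x i, ξ i))
          = (∏ i, w p (x i)) * ∏ i, w δ (ξ i) := by
        intro ξ; rw [← Finset.prod_mul_distrib]
      calc (∑ ξ : ι → Bool, (∏ i, μ (x i, ξ i)) * (if PF v d x
            ∧ (∀ i, x i ≠ witU v d x i → ξ i = true) then 1 else 0))
          = ∑ ξ : ι → Bool, (∏ i, w p (x i)) * ((∏ i, w δ (ξ i))
              * (if ∀ i ∈ (Finset.univ.filter fun i => x i ≠ witU v d x i), ξ i = true
                  then 1 else 0)) := by
            refine Finset.sum_congr rfl fun ξ _ => ?_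
            rw [hprodsplit ξ]
            have : (PF v d x ∧ (∀ i, x i ≠ witU v d x i → ξ i = true))
                ↔ (∀ i ∈ (Finset.univ.filter fun i => x i ≠ witU v d x i), ξ i = true) := by
              constructor
              · intro h i hi
                exact h.2 i (Finset.mem_filter.1 hi).2
              · intro h
                exact ⟨hx, fun i hi => h i (Finset.mem_filter.2 ⟨Finset.mem_univ i, hi⟩)⟩
            rw [if_congr this rfl rfl]
            ring
          _ = (∏ i, w p (x i)) * ∑ ξ : ι → Bool, ((∏ i, w δ (ξ i))
              * (if ∀ i ∈ (Finset.univ.filter fun i => x i ≠ witU v d x i), ξ i = true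
                  then 1 else 0)) := by rw [← Finset.mul_sum]
          _ = (∏ i, w p (x i)) * (w δ true)
              ^ ((Finset.univ.filter fun i => x i ≠ witU v d x i).card) := by
            rw [sum_event]
          _ = (∏ i, w p (x i)) * δ ^ ((Finset.univ.filter fun i => x i ≠ witU v d x i).card) := by
            have : w δ true = δ := by simp [w]
            rw [this]
    rw [inner, if_pos hx]
    have hcard : ((Finset.univ.filter fun i => x i ≠ witU v d x i).card) ≤ d := by
      have := witU_dist v d hx
      rw [hammingDist_eq] at this
      exact this
    have hpow : δ ^ d ≤ δ ^ ((Finset.univ.filter fun i => x i ≠ witU v d x i).card) :=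
      pow_le_pow_of_le_one hδ0.le hδ1 hcard
    have hW : 0 ≤ ∏ i, w p (x i) := Finset.prod_nonneg fun i _ => hw1 _
    calc δ ^ d * (∏ i, w p (x i)) ≤ (∏ i, w p (x i))
          * δ ^ ((Finset.univ.filter fun i => x i ≠ witU v d x i).card) := by
          rw [mul_comm]; exact mul_le_mul_of_nonneg_left hpow hW
      _ = _ := rfl
  · rw [if_neg hx, mul_zero]
    refine Finset.sum_nonneg fun ξ _ => ?_
    have h0 : (if PF v d x ∧ (∀ i, x i ≠ witU v d x i → ξ i = true) then (1:ℝ) else 0) = 0 := by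
      rw [if_neg]; exact fun h => hx h.1
    rw [h0, mul_zero]

end Core3

lemma fragProb_eq (n d : ℕ) (p : ℝ) : fragProb n d p
    = (∑ a : Fin (2 ^ n) → Bool,
        Set.indicator {a | PT (gameValue n) d a} (fun a => ∏ i, w p (a i)) a)
      + (∑ a : Fin (2 ^ n) → Bool,
        Set.indicator {a | PF (gameValue n) d a} (fun a => ∏ i, w p (a i)) a) := by
  classical
  unfold fragProb prob
  rw [← Finset.sum_add_distrib]
  refine Finset.sum_congr rfl fun a _ => ?_
  simp only [Set.indicator_apply, Set.mem_setOf_eq]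
  have hw : (∏ i, if a i then p else 1 - p) = ∏ i, w p (a i) := rfl
  by_cases hf : Fragile n d a
  · cases hva : gameValue n a
    · rw [if_pos hf, if_neg, if_pos ⟨hva, hf⟩, hw, zero_add]
      rintro ⟨h1, -⟩
      rw [hva] at h1
      exact Bool.false_ne_true h1
    · rw [if_pos hf, if_pos ⟨hva, hf⟩, if_neg, hw, add_zero]
      rintro ⟨h1, -⟩
      rw [hva] at h1
      simp at h1
  · rw [if_neg hf, if_neg (fun h => hf h.2), if_neg (fun h => hf h.2), add_zero]

lemma fragProb_nonneg (n d : ℕ) {p : ℝ} (hp0 : 0 ≤ p) (hp1 : p ≤ 1) : 0 ≤ fragProb n d p := by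
  unfold fragProb prob
  refine Finset.sum_nonneg fun a _ => ?_
  refine Set.indicator_apply_nonneg fun _ => ?_
  exact Finset.prod_nonneg fun i _ => by
    cases h : a i <;> simp [h] <;> linarith

/-- Non-golden games are asymptotically robust: for `p ∈ [0,1]` with `p ≠ φ` and any fixed
`d`, `F_n(d,p) → 0` as `n → ∞`. -/
theorem non_golden_not_fragile (p : ℝ) (hp0 : 0 ≤ p) (hp1 : p ≤ 1) (hp : p ≠ phi) (d : ℕ) :
    Tendsto (fun n => fragProb n d p) atTop (𝓝 0) := by
  obtain ⟨hphi0, hphi1, hphiq⟩ := phi_facts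
  have key : ∀ δ : ℝ, 0 < δ → δ ≤ 1 → ∀ n : ℕ,
      fragProb n d p ≤ (qv n (p + δ * (1 - p)) - qv n (p * (1 - δ))) / δ ^ d := by
    intro δ hδ0 hδ1 n
    have hd := coreDown (gameValue n) (gameValue_mono n) d p δ hp0 hp1 hδ0 hδ1
    have hu := coreUp (gameValue n) d (gameValue_mono n) p δ hp0 hp1 hδ0 hδ1
    have hpow : (0:ℝ) < δ ^ d := pow_pos hδ0 d
    rw [le_div_iff₀ hpow, fragProb_eq n d p, mul_comm]
    have h1 : δ ^ d * (∑ a : Fin (2 ^ n) → Bool,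
        Set.indicator {a | PT (gameValue n) d a} (fun a => ∏ i, w p (a i)) a)
        ≤ qv n p - qv n (p * (1 - δ)) := hd
    have h2 : δ ^ d * (∑ a : Fin (2 ^ n) → Bool,
        Set.indicator {a | PF (gameValue n) d a} (fun a => ∏ i, w p (a i)) a)
        ≤ qv n (p + δ * (1 - p)) - qv n p := hu
    calc δ ^ d * ((∑ a : Fin (2 ^ n) → Bool,
          Set.indicator {a | PT (gameValue n) d a} (fun a => ∏ i, w p (a i)) a)
          + ∑ a : Fin (2 ^ n) → Bool,
          Set.indicator {a | PF (gameValue n) d a} (fun a => ∏ i, w p (a i)) a)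
        = δ ^ d * (∑ a : Fin (2 ^ n) → Bool,
          Set.indicator {a | PT (gameValue n) d a} (fun a => ∏ i, w p (a i)) a)
          + δ ^ d * ∑ a : Fin (2 ^ n) → Bool,
          Set.indicator {a | PF (gameValue n) d a} (fun a => ∏ i, w p (a i)) a := by ring
      _ ≤ (qv n p - qv n (p * (1 - δ))) + (qv n (p + δ * (1 - p)) - qv n p) := add_le_add h1 h2
      _ = qv n (p + δ * (1 - p)) - qv n (p * (1 - δ)) := by ring
  rcases hp.lt_or_gt with hlt | hgt
  · -- p < phi : both perturbed parameters stay below phi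
    set δ : ℝ := (phi - p) / 2 with hδ
    have hδ0 : 0 < δ := by rw [hδ]; linarith
    have hδ1 : δ ≤ 1 := by rw [hδ]; linarith
    have hm0 : 0 ≤ p * (1 - δ) := by nlinarith
    have hmlt : p * (1 - δ) < phi := by nlinarith
    have hp0' : 0 ≤ p + δ * (1 - p) := by nlinarith
    have hplt : p + δ * (1 - p) < phi := by nlinarith
    have ht1 : Tendsto (fun n => qv n (p + δ * (1 - p))) atTop (𝓝 0) :=
      qv_tendsto_zero hp0' hplt
    have ht2 : Tendsto (fun n => qv n (p * (1 - δ))) atTop (𝓝 0) :=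
      qv_tendsto_zero hm0 hmlt
    have hG : Tendsto (fun n => (qv n (p + δ * (1 - p)) - qv n (p * (1 - δ))) / δ ^ d)
        atTop (𝓝 0) := by
      have := (ht1.sub ht2).div_const (δ ^ d)
      simpa using this
    refine tendsto_of_tendsto_of_tendsto_of_le_of_le tendsto_const_nhds hG
      (fun n => fragProb_nonneg n d hp0 hp1) (fun n => key δ hδ0 hδ1 n)
  · -- phi < p
    have hp0'' : 0 < p := lt_trans hphi0 hgt
    set δ : ℝ := (p - phi) / (2 * p) with hδ
    have hδ0 : 0 < δ := by rw [hδ]; apply div_pos <;> linarith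
    have hδhalf : δ < 1 / 2 := by
      rw [hδ, div_lt_div_iff₀ (by linarith) (by norm_num)]
      nlinarith
    have hδ1 : δ ≤ 1 := by linarith
    have hmeq : p * (1 - δ) = (p + phi) / 2 := by
      rw [hδ]; field_simp; ring
    have hmgt : phi < p * (1 - δ) := by rw [hmeq]; linarith
    have hm1 : p * (1 - δ) ≤ 1 := by rw [hmeq]; linarith
    have hpgt : phi < p + δ * (1 - p) := by nlinarith
    have hp1' : p + δ * (1 - p) ≤ 1 := by nlinarith
    have ht1 : Tendsto (fun n => qv n (p + δ * (1 - p))) atTop (𝓝 1) :=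
      qv_tendsto_one hpgt hp1'
    have ht2 : Tendsto (fun n => qv n (p * (1 - δ))) atTop (𝓝 1) :=
      qv_tendsto_one hmgt hm1
    have hG : Tendsto (fun n => (qv n (p + δ * (1 - p)) - qv n (p * (1 - δ))) / δ ^ d)
        atTop (𝓝 0) := by
      have := (ht1.sub ht2).div_const (δ ^ d)
      simpa using this
    refine tendsto_of_tendsto_of_tendsto_of_le_of_le tendsto_const_nhds hG
      (fun n => fragProb_nonneg n d hp0 hp1) (fun n => key δ hδ0 hδ1 n)
end

section
/- Let h : ℝ → ℝ be given by h(x) = φ³ + 2φ²x². Then the fixed points of h in ℝ are exactly φ/2 and 1; moreover the sequence defined by x_0 = 0 and x_{n+1} = h(x_n) is nondecreasing, bounded above by φ/2, and converges to φ/2, the unique fixed point of h in the open interval (0,1). -/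
open Filter Topology

/-- The one-step recursion map `h(x) = φ³ + 2φ²x²` of the 1-fragility analysis. -/
noncomputable def hmap (x : ℝ) : ℝ := phi ^ 3 + 2 * phi ^ 2 * x ^ 2

lemma phi_sq : phi ^ 2 = 1 - phi := by
  have h5 : Real.sqrt 5 ^ 2 = 5 := Real.sq_sqrt (by norm_num)
  unfold phi; nlinarith [h5]

lemma phi_pos : 0 < phi := by
  have h5 : Real.sqrt 5 ^ 2 = 5 := Real.sq_sqrt (by norm_num)
  have hnn : (0:ℝ) ≤ Real.sqrt 5 := Real.sqrt_nonneg 5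
  have : (2:ℝ) < Real.sqrt 5 := by nlinarith
  unfold phi; linarith

lemma phi_lt_one : phi < 1 := by
  have h5 : Real.sqrt 5 ^ 2 = 5 := Real.sq_sqrt (by norm_num)
  have hnn : (0:ℝ) ≤ Real.sqrt 5 := Real.sqrt_nonneg 5
  have : Real.sqrt 5 < 3 := by nlinarith
  unfold phi; linarith

lemma key_sum : 2 * phi ^ 2 + phi ^ 3 = 1 := by
  have h := phi_sq; nlinarith [h]

lemma hmap_mono {a b : ℝ} (ha : 0 ≤ a) (hab : a ≤ b) : hmap a ≤ hmap b := by
  unfold hmap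
  nlinarith [pow_le_pow_left₀ ha hab 2, sq_nonneg phi, phi_pos]

lemma hmap_factor (x : ℝ) : hmap x - x = 2 * phi ^ 2 * (x - phi / 2) * (x - 1) := by
  unfold hmap
  linear_combination x * key_sum

/-- The fixed points of `h(x) = φ³ + 2φ²x²` are exactly `φ/2` and `1`; the sequence
`x_0 = 0`, `x_{n+1} = h(x_n)` is nondecreasing, bounded above by `φ/2`, and converges to
`φ/2`, the unique fixed point of `h` in `(0,1)`. -/
theorem hmap_fixed_points_and_iteration :
    {x : ℝ | hmap x = x} = {phi / 2, 1} ∧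
      Monotone (fun n => hmap^[n] 0) ∧
      (∀ n : ℕ, hmap^[n] 0 ≤ phi / 2) ∧
      Tendsto (fun n => hmap^[n] 0) atTop (𝓝 (phi / 2)) ∧
      ∀ y ∈ Set.Ioo (0 : ℝ) 1, hmap y = y → y = phi / 2 := by
  have hpos := phi_pos
  have hlt := phi_lt_one
  have hsq := phi_sq
  have h2pos : (0:ℝ) < 2 * phi ^ 2 := by positivity
  have hfixset : {x : ℝ | hmap x = x} = {phi / 2, 1} := by
    ext x
    simp only [Set.mem_setOf_eq, Set.mem_insert_iff, Set.mem_singleton_iff]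
    constructor
    · intro hx
      have := hmap_factor x
      rw [hx, sub_self] at this
      have := this.symm
      rcases mul_eq_zero.mp this with h | h
      · rcases mul_eq_zero.mp h with h | h
        · exfalso; linarith
        · left; linarith
      · right; linarith
    · rintro (rfl | rfl)
      · nlinarith [hmap_factor (phi / 2)]
      · nlinarith [hmap_factor 1]
  -- fixed point at phi/2
  have hfix : hmap (phi / 2) = phi / 2 := by
    have := hmap_factor (phi / 2); simp at this; linarith
  -- bounds by induction
  have hbounds : ∀ n : ℕ, 0 ≤ hmap^[n] 0 ∧ hmap^[n] 0 ≤ phi / 2 := by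
    intro n
    induction n with
    | zero => simp; linarith
    | succ n ih =>
      obtain ⟨h0, h1⟩ := ih
      rw [Function.iterate_succ_apply']
      constructor
      · unfold hmap; positivity
      · have hm : hmap (hmap^[n] 0) ≤ hmap (phi / 2) := hmap_mono h0 h1
        linarith [hfix, hm]
  -- monotone
  have hmono : Monotone (fun n => hmap^[n] 0) := by
    apply monotone_nat_of_le_succ
    intro n
    obtain ⟨h0, h1⟩ := hbounds n
    rw [Function.iterate_succ_apply']
    have hf2 := hmap_factor (hmap^[n] 0)
    have a1 : hmap^[n] 0 - phi / 2 ≤ 0 := by linarith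
    have a2 : hmap^[n] 0 - 1 ≤ 0 := by linarith
    have hprod : 0 ≤ (hmap^[n] 0 - phi / 2) * (hmap^[n] 0 - 1) := by
      nlinarith [mul_nonneg (neg_nonneg.mpr a1) (neg_nonneg.mpr a2)]
    nlinarith [hprod]
  refine ⟨hfixset, hmono, fun n => (hbounds n).2, ?_, ?_⟩
  · -- convergence
    have hbdd : BddAbove (Set.range fun n => hmap^[n] 0) := by
      refine ⟨phi / 2, ?_⟩
      rintro x ⟨n, rfl⟩
      exact (hbounds n).2
    have htend := tendsto_atTop_ciSup hmono hbdd
    set L := ⨆ n, hmap^[n] 0 with hL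
    have hLle : L ≤ phi / 2 := ciSup_le fun n => (hbounds n).2
    have hcont : Continuous hmap := by
      unfold hmap; fun_prop
    have h1 : Tendsto (fun n => hmap^[n+1] 0) atTop (𝓝 L) :=
      htend.comp (tendsto_add_atTop_nat 1)
    have h2 : Tendsto (fun n => hmap (hmap^[n] 0)) atTop (𝓝 (hmap L)) :=
      (hcont.tendsto L).comp htend
    have h12 : (fun n => hmap^[n+1] 0) = fun n => hmap (hmap^[n] 0) := by
      funext n; rw [Function.iterate_succ_apply']
    rw [h12] at h1
    have hLfix : hmap L = L := tendsto_nhds_unique h2 h1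
    have hLmem : L ∈ {x : ℝ | hmap x = x} := hLfix
    rw [hfixset] at hLmem
    have : L ∈ ({phi / 2, 1} : Set ℝ) := hLmem
    rcases this with h | h
    · rwa [h] at htend
    · exfalso; rw [h] at hLle; linarith
  · -- uniqueness
    intro y hy hyfix
    have hymem : y ∈ {x : ℝ | hmap x = x} := hyfix
    rw [hfixset] at hymem
    rcases hymem with h | h
    · exact h
    · exfalso; exact absurd h (by simp; linarith [hy.2])
end
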